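/- Let μ = a_1 δ_{y_1} + a_2 δ_{y_2} with distinct y_1, y_2 ∈ ℝ and nonzero a_1, a_2 ∈ ℂ, set m_min = min(|a_1|, |a_2|), and let Y(ω) = F[μ](ω) + W(ω) be a measurement with |W(ω)| < σ for ω ∈ {−Ω, 0, Ω}. Let H be the 2×2 complex Hankel matrix with rows (Y(−Ω), Y(0)) and (Y(0), Y(Ω)), and let σ̂_2 = min_{x ∈ ℂ², ‖x‖_2 = 1} ‖H x‖_2 be its smallest singular value. If σ/m_min ≤ 1/2 and (4/Ω) · arcsin((σ/m_min)^{1/2}) ≤ |y_1 − y_2| ≤ π/Ω, then σ̂_2 > 2σ. -/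

import Mathlib

/-!
With `zⱼ = e^{i yⱼ Ω}` on the unit circle and `wⱼ = aⱼ (x₁ + zⱼ x₂)`, the noiseless Hankel matrix
sends `x` to `(z₁⁻¹ (w₁ + (z₁/z₂) w₂), w₁ + w₂)`. For unimodular `α, β` one has
`‖u + α v‖² + ‖u + β v‖² ≥ (2 - |α + β|)(‖u‖² + ‖v‖²)`; applied once to `x` and once to `w`, this
bounds the smallest singular value of the noiseless matrix below by `(2 - |z₁ + z₂|) m_min`.
Since `2 - |z₁ + z₂| = 4 sin² (Ω |y₁ - y₂| / 4)`, the separation condition makes this at least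
`4σ`, while the noise matrix has Frobenius norm `< 2σ`; Weyl's inequality gives `σ̂₂ > 2σ`.
-/

open Complex
open scoped InnerProductSpace

theorem two_sub_norm_add_mul_sum_sq_le_norm_add_smul_sq {𝕜 E : Type*} [RCLike 𝕜]
    [NormedAddCommGroup E] [InnerProductSpace 𝕜 E] {a b : 𝕜} (ha : ‖a‖ = 1) (hb : ‖b‖ = 1)
    (x y : E) :
    (2 - ‖a + b‖) * (‖x‖ ^ 2 + ‖y‖ ^ 2) ≤ ‖x + a • y‖ ^ 2 + ‖x + b • y‖ ^ 2 := by
  have hcross : -(‖a + b‖ * (‖x‖ * ‖y‖)) ≤ RCLike.re ⟪x, a • y⟫_𝕜 + RCLike.re ⟪x, b • y⟫_𝕜 := by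
    rw [← map_add, ← inner_add_right, ← add_smul]
    have := (abs_le.1 ((RCLike.abs_re_le_norm (K := 𝕜) _).trans
      (norm_inner_le_norm x ((a + b) • y)))).1
    rw [norm_smul] at this
    linarith
  rw [@norm_add_sq 𝕜, @norm_add_sq 𝕜, norm_smul, norm_smul, ha, hb]
  nlinarith [mul_nonneg (norm_nonneg (a + b)) (sq_nonneg (‖x‖ - ‖y‖))]

theorem norm_mul_add_mul_sq_le (a b x₁ x₂ : ℂ) :
    ‖a * x₁ + b * x₂‖ ^ 2 ≤ (‖a‖ ^ 2 + ‖b‖ ^ 2) * (‖x₁‖ ^ 2 + ‖x₂‖ ^ 2) := by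
  have htri : ‖a * x₁ + b * x₂‖ ≤ ‖a‖ * ‖x₁‖ + ‖b‖ * ‖x₂‖ :=
    (norm_add_le _ _).trans_eq (by rw [norm_mul, norm_mul])
  nlinarith [norm_nonneg (a * x₁ + b * x₂), sq_nonneg (‖a‖ * ‖x₂‖ - ‖b‖ * ‖x₁‖),
    mul_nonneg (norm_nonneg a) (norm_nonneg x₁), mul_nonneg (norm_nonneg b) (norm_nonneg x₂)]

theorem Complex.norm_exp_ofReal_mul_I_add_exp_ofReal_mul_I (α β : ℝ) :
    ‖exp (α * I) + exp (β * I)‖ = 2 * |Real.cos ((α - β) / 2)| := by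
  have hfactor : exp (α * I) + exp (β * I)
      = exp (↑((α + β) / 2) * I) * (2 * cos ↑((α - β) / 2)) := by
    rw [two_cos, mul_add, ← exp_add, ← exp_add]
    congr 2 <;> push_cast <;> ring
  rw [hfactor, norm_mul, norm_exp_ofReal_mul_I, one_mul, norm_mul, ← ofReal_cos, norm_real,
    Real.norm_eq_abs, Complex.norm_two]

theorem four_mul_le_two_sub_two_mul_abs_cos {ρ d : ℝ} (hρ : 0 ≤ ρ)
    (h₁ : 4 * Real.arcsin √ρ ≤ |d|) (h₂ : |d| ≤ Real.pi) :
    4 * ρ ≤ 2 - 2 * |Real.cos (d / 2)| := by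
  have hπ := Real.pi_pos
  have hsqrt : √ρ ≤ 1 := by
    by_contra! h
    rw [Real.arcsin_of_one_le h.le] at h₁
    linarith
  have hsin : √ρ ≤ Real.sin (|d| / 4) :=
    (Real.arcsin_le_iff_le_sin ⟨by linarith [Real.sqrt_nonneg ρ], hsqrt⟩
      ⟨by linarith [abs_nonneg d], by linarith⟩).1 (by linarith)
  have hcos : |Real.cos (d / 2)| = 1 - 2 * Real.sin (|d| / 4) ^ 2 := by
    rw [← Real.cos_abs, abs_div, abs_two, abs_of_nonneg (Real.cos_nonneg_of_mem_Icc
      ⟨by linarith [abs_nonneg d], by linarith⟩), show |d| / 2 = 2 * (|d| / 4) by ring,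
      Real.cos_two_mul, Real.cos_sq']
    ring
  rw [hcos]
  nlinarith [Real.sq_sqrt hρ, Real.sqrt_nonneg ρ]

theorem four_mul_le_two_sub_norm_exp_add_exp {Ω y₁ y₂ ρ : ℝ} (hΩ : 0 < Ω) (hρ : 0 ≤ ρ)
    (h₁ : 4 / Ω * Real.arcsin √ρ ≤ |y₁ - y₂|) (h₂ : |y₁ - y₂| ≤ Real.pi / Ω) :
    4 * ρ ≤ 2 - ‖exp (↑(y₁ * Ω) * I) + exp (↑(y₂ * Ω) * I)‖ := by
  have hd : |y₁ * Ω - y₂ * Ω| = |y₁ - y₂| * Ω := by rw [← sub_mul, abs_mul, abs_of_pos hΩ]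
  rw [div_mul_eq_mul_div, div_le_iff₀ hΩ] at h₁
  rw [le_div_iff₀ hΩ] at h₂
  rw [norm_exp_ofReal_mul_I_add_exp_ofReal_mul_I]
  exact four_mul_le_two_sub_two_mul_abs_cos hρ (hd ▸ h₁) (hd ▸ h₂)

def hankelMulVec (p q r x₁ x₂ : ℂ) : EuclideanSpace ℂ (Fin 2) :=
  !₂[p * x₁ + q * x₂, q * x₁ + r * x₂]

section hankelMulVec

variable (p q r x₁ x₂ : ℂ)

theorem norm_hankelMulVec :
    ‖hankelMulVec p q r x₁ x₂‖ = √(‖p * x₁ + q * x₂‖ ^ 2 + ‖q * x₁ + r * x₂‖ ^ 2) := by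
  simp [hankelMulVec, EuclideanSpace.norm_eq, Fin.sum_univ_two]

theorem hankelMulVec_add (p' q' r' : ℂ) : hankelMulVec (p + p') (q + q') (r + r') x₁ x₂
    = hankelMulVec p q r x₁ x₂ + hankelMulVec p' q' r' x₁ x₂ := by
  ext i
  fin_cases i <;> simp [hankelMulVec] <;> ring

theorem norm_hankelMulVec_le : ‖hankelMulVec p q r x₁ x₂‖
    ≤ √(‖p‖ ^ 2 + 2 * ‖q‖ ^ 2 + ‖r‖ ^ 2) * √(‖x₁‖ ^ 2 + ‖x₂‖ ^ 2) := by
  rw [norm_hankelMulVec, ← Real.sqrt_mul (by positivity)]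
  gcongr
  nlinarith [norm_mul_add_mul_sq_le p q x₁ x₂, norm_mul_add_mul_sq_le q r x₁ x₂]

theorem sub_le_norm_hankelMulVec_add {p' q' r' : ℂ} {L : ℝ}
    (hL : L ≤ ‖hankelMulVec p q r x₁ x₂‖) (hx : ‖x₁‖ ^ 2 + ‖x₂‖ ^ 2 = 1) :
    L - √(‖p'‖ ^ 2 + 2 * ‖q'‖ ^ 2 + ‖r'‖ ^ 2)
      ≤ ‖hankelMulVec (p + p') (q + q') (r + r') x₁ x₂‖ := by
  have hE := norm_hankelMulVec_le p' q' r' x₁ x₂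
  rw [hx, Real.sqrt_one, mul_one] at hE
  rw [hankelMulVec_add]
  exact le_trans (by linarith) (norm_sub_le_norm_add _ _)

end hankelMulVec

theorem two_sub_norm_add_mul_le_norm_hankelMulVec {z₁ z₂ a₁ a₂ : ℂ} {m : ℝ}
    (hz₁ : ‖z₁‖ = 1) (hz₂ : ‖z₂‖ = 1) (hm : 0 ≤ m) (hm₁ : m ≤ ‖a₁‖) (hm₂ : m ≤ ‖a₂‖)
    (x₁ x₂ : ℂ) :
    (2 - ‖z₁ + z₂‖) * m * √(‖x₁‖ ^ 2 + ‖x₂‖ ^ 2) ≤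
      ‖hankelMulVec (a₁ * z₁⁻¹ + a₂ * z₂⁻¹) (a₁ + a₂) (a₁ * z₁ + a₂ * z₂) x₁ x₂‖ := by
  have hz₁0 : z₁ ≠ 0 := norm_ne_zero_iff.1 (by simp [hz₁])
  have hz₂0 : z₂ ≠ 0 := norm_ne_zero_iff.1 (by simp [hz₂])
  have hδ : 0 ≤ 2 - ‖z₁ + z₂‖ := by linarith [norm_add_le z₁ z₂]
  have hg : ‖z₁ * z₂⁻¹‖ = 1 := by simp [hz₁, hz₂]
  have hg1 : ‖z₁ * z₂⁻¹ + 1‖ = ‖z₁ + z₂‖ := by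
    rw [show z₁ * z₂⁻¹ + 1 = (z₁ + z₂) * z₂⁻¹ by field_simp, norm_mul, norm_inv, hz₂, inv_one,
      mul_one]
  have hrow₁ : ‖(a₁ * z₁⁻¹ + a₂ * z₂⁻¹) * x₁ + (a₁ + a₂) * x₂‖
      = ‖a₁ * (x₁ + z₁ * x₂) + z₁ * z₂⁻¹ * (a₂ * (x₁ + z₂ * x₂))‖ := by
    rw [show (a₁ * z₁⁻¹ + a₂ * z₂⁻¹) * x₁ + (a₁ + a₂) * x₂
        = z₁⁻¹ * (a₁ * (x₁ + z₁ * x₂) + z₁ * z₂⁻¹ * (a₂ * (x₁ + z₂ * x₂))) by field_simp; ring,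
      norm_mul, norm_inv, hz₁, inv_one, one_mul]
  have hrow₂ : (a₁ + a₂) * x₁ + (a₁ * z₁ + a₂ * z₂) * x₂
      = a₁ * (x₁ + z₁ * x₂) + 1 * (a₂ * (x₁ + z₂ * x₂)) := by ring
  have hx := two_sub_norm_add_mul_sum_sq_le_norm_add_smul_sq hz₁ hz₂ x₁ x₂
  have hw := two_sub_norm_add_mul_sum_sq_le_norm_add_smul_sq hg (norm_one (α := ℂ))
    (a₁ * (x₁ + z₁ * x₂)) (a₂ * (x₁ + z₂ * x₂))
  simp only [smul_eq_mul, hg1] at hx hw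
  have hamp : m ^ 2 * (‖x₁ + z₁ * x₂‖ ^ 2 + ‖x₁ + z₂ * x₂‖ ^ 2)
      ≤ ‖a₁ * (x₁ + z₁ * x₂)‖ ^ 2 + ‖a₂ * (x₁ + z₂ * x₂)‖ ^ 2 := by
    rw [norm_mul, norm_mul, mul_pow, mul_pow, mul_add]
    gcongr
  rw [norm_hankelMulVec, hrow₁, hrow₂]
  refine Real.le_sqrt_of_sq_le ?_
  rw [mul_pow, Real.sq_sqrt (by positivity)]
  calc ((2 - ‖z₁ + z₂‖) * m) ^ 2 * (‖x₁‖ ^ 2 + ‖x₂‖ ^ 2)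
      = (2 - ‖z₁ + z₂‖) * (m ^ 2 * ((2 - ‖z₁ + z₂‖) * (‖x₁‖ ^ 2 + ‖x₂‖ ^ 2))) := by ring
    _ ≤ (2 - ‖z₁ + z₂‖) * (m ^ 2 * (‖x₁ + z₁ * x₂‖ ^ 2 + ‖x₁ + z₂ * x₂‖ ^ 2)) := by gcongr
    _ ≤ (2 - ‖z₁ + z₂‖) * (‖a₁ * (x₁ + z₁ * x₂)‖ ^ 2 + ‖a₂ * (x₁ + z₂ * x₂)‖ ^ 2) := by gcongr
    _ ≤ _ := hw

theorem hankel_min_singular_value_two_sources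
    (Ω σ : ℝ) (hΩ : 0 < Ω)
    (y₁ y₂ : ℝ)
    (a₁ a₂ : ℂ) (ha₁ : a₁ ≠ 0) (ha₂ : a₂ ≠ 0)
    (mmin : ℝ) (hmmin : mmin = min ‖a₁‖ ‖a₂‖)
    (W : ℝ → ℂ) (hW : ∀ ω ∈ ({-Ω, 0, Ω} : Set ℝ), ‖W ω‖ < σ)
    (Y : ℝ → ℂ)
    (hY : ∀ ω ∈ ({-Ω, 0, Ω} : Set ℝ),
      Y ω = a₁ * Complex.exp (Complex.I * (y₁ : ℂ) * (ω : ℂ))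
        + a₂ * Complex.exp (Complex.I * (y₂ : ℂ) * (ω : ℂ)) + W ω)
    (σ₂ : ℝ)
    (hσ₂ : σ₂ = sInf {r : ℝ | ∃ x₁ x₂ : ℂ,
      ‖x₁‖ ^ 2 + ‖x₂‖ ^ 2 = 1 ∧
      r = Real.sqrt (‖Y (-Ω) * x₁ + Y 0 * x₂‖ ^ 2
        + ‖Y 0 * x₁ + Y Ω * x₂‖ ^ 2)})
    (hsep₁ : 4 / Ω * Real.arcsin (Real.sqrt (σ / mmin)) ≤ |y₁ - y₂|)
    (hsep₂ : |y₁ - y₂| ≤ Real.pi / Ω) :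
    2 * σ < σ₂ := by
  have hm : 0 < mmin := hmmin ▸ lt_min (norm_pos_iff.2 ha₁) (norm_pos_iff.2 ha₂)
  have hσ : 0 < σ := (norm_nonneg _).trans_lt (hW 0 (by simp))
  set z₁ := exp (↑(y₁ * Ω) * I)
  set z₂ := exp (↑(y₂ * Ω) * I)
  obtain ⟨hYneg, hYzero, hYpos⟩ : Y (-Ω) = (a₁ * z₁⁻¹ + a₂ * z₂⁻¹) + W (-Ω) ∧
      Y 0 = (a₁ + a₂) + W 0 ∧ Y Ω = (a₁ * z₁ + a₂ * z₂) + W Ω := by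
    refine ⟨?_, ?_, ?_⟩ <;> rw [hY _ (by simp)]
    · rw [← Complex.exp_neg, ← Complex.exp_neg]; congr 4 <;> push_cast <;> ring
    · simp
    · congr 4 <;> push_cast <;> ring
  have hgap : 4 * σ ≤ (2 - ‖z₁ + z₂‖) * mmin := by
    calc 4 * σ = 4 * (σ / mmin) * mmin := by field_simp
      _ ≤ _ := by gcongr; exact four_mul_le_two_sub_norm_exp_add_exp hΩ (by positivity) hsep₁ hsep₂
  have hnoise : √(‖W (-Ω)‖ ^ 2 + 2 * ‖W 0‖ ^ 2 + ‖W Ω‖ ^ 2) < 2 * σ := by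
    have hW' (ω) (hω : ω ∈ ({-Ω, 0, Ω} : Set ℝ)) : ‖W ω‖ ^ 2 < σ ^ 2 :=
      pow_lt_pow_left₀ (hW ω hω) (norm_nonneg _) two_ne_zero
    rw [Real.sqrt_lt' (by positivity)]
    linarith [hW' (-Ω) (by simp), hW' 0 (by simp), hW' Ω (by simp)]
  calc 2 * σ < 4 * σ - √(‖W (-Ω)‖ ^ 2 + 2 * ‖W 0‖ ^ 2 + ‖W Ω‖ ^ 2) := by linarith
    _ ≤ σ₂ := by
      rw [hσ₂]
      refine le_csInf ⟨_, 1, 0, by simp, rfl⟩ ?_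
      rintro r ⟨x₁, x₂, hx, rfl⟩
      rw [← norm_hankelMulVec, hYneg, hYzero, hYpos]
      refine sub_le_norm_hankelMulVec_add _ _ _ _ _ (hgap.trans ?_) hx
      simpa only [hx, Real.sqrt_one, mul_one] using two_sub_norm_add_mul_le_norm_hankelMulVec
        (norm_exp_ofReal_mul_I (y₁ * Ω)) (norm_exp_ofReal_mul_I (y₂ * Ω)) hm.le
        (hmmin ▸ min_le_left ‖a₁‖ ‖a₂‖) (hmmin ▸ min_le_right ‖a₁‖ ‖a₂‖) x₁ x₂
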